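/- arXiv:math-ph/0307057 — 3 statements merged into one kernel-verified Lean document; each statement's English description precedes it below -/
import Mathlib

section
/- For α ≠ ±1, setting g = g_α, ĝ = g_{-α}, ḡ = g_α + g_{-α}, g_r = ĝ - g, and a = g_α'(1), the conjugate-symmetry identity -α·ḡ(u) = 2u·g_r'(u) - g_r(u) + 2au + 2a holds for all u > 0, where α = 2g_α'''(1)+3. -/
private lemma hasDerivAt_g (β : ℝ) (x : ℝ) (hx : 0 < x) :
    HasDerivAt (fun u : ℝ => (4 / (1 - β ^ 2)) * ((1 + u) / 2 - u ^ ((1 + β) / 2)))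
      ((4 / (1 - β ^ 2)) * (1 / 2 - ((1 + β) / 2) * x ^ ((1 + β) / 2 - 1))) x := by
  have h1 : HasDerivAt (fun u : ℝ => (1 + u) / 2) (1 / 2) x := by
    simpa using ((hasDerivAt_id x).const_add 1).div_const 2
  have h2 : HasDerivAt (fun u : ℝ => u ^ ((1 + β) / 2)) (((1 + β) / 2) * x ^ ((1 + β) / 2 - 1)) x :=
    Real.hasDerivAt_rpow_const (Or.inl hx.ne')
  exact (h1.sub h2).const_mul _

/-- For α ≠ ±1, with g = g_α, ĝ = g_{-α}, ḡ = g_α + g_{-α}, g_r = ĝ - g and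
a = g_α'(1), the conjugate-symmetry identity
-α ḡ(u) = 2u g_r'(u) - g_r(u) + 2au + 2a holds for u > 0. -/
theorem stmt14 (α : ℝ) (h1 : α ≠ 1) (h2 : α ≠ -1) :
    let g : ℝ → ℝ → ℝ := fun β u => (4 / (1 - β ^ 2)) * ((1 + u) / 2 - u ^ ((1 + β) / 2))
    let gbar : ℝ → ℝ := fun u => g α u + g (-α) u
    let gr : ℝ → ℝ := fun u => g (-α) u - g α u
    let a : ℝ := deriv (g α) 1
    ∀ u : ℝ, 0 < u →
      -α * gbar u = 2 * u * deriv gr u - gr u + 2 * a * u + 2 * a := by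
  intro g gbar gr a u hu
  have hne : 1 - α ^ 2 ≠ 0 := by
    intro h
    have : (1 - α) * (1 + α) = 0 := by ring_nf; linarith [h]
    rcases mul_eq_zero.1 this with h' | h'
    · exact h1 (by linarith)
    · exact h2 (by linarith)
  have ha : a = (4 / (1 - α ^ 2)) * (1 / 2 - (1 + α) / 2) := by
    show deriv (g α) 1 = _
    have := (hasDerivAt_g α 1 one_pos).deriv
    rw [show g α = fun u : ℝ => (4 / (1 - α ^ 2)) * ((1 + u) / 2 - u ^ ((1 + α) / 2)) from rfl,
      this, Real.one_rpow]
    ring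
  have hderiv : deriv gr u =
      (4 / (1 - α ^ 2)) * (1 / 2 - ((1 - α) / 2) * u ^ ((1 - α) / 2 - 1))
        - (4 / (1 - α ^ 2)) * (1 / 2 - ((1 + α) / 2) * u ^ ((1 + α) / 2 - 1)) := by
    have hm := (hasDerivAt_g (-α) u hu).sub (hasDerivAt_g α u hu)
    have : gr = fun u : ℝ =>
        (4 / (1 - (-α) ^ 2)) * ((1 + u) / 2 - u ^ ((1 + -α) / 2))
          - (4 / (1 - α ^ 2)) * ((1 + u) / 2 - u ^ ((1 + α) / 2)) := rfl
    rw [this]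
    exact hm.deriv.trans (by norm_num [show (1:ℝ) + -α = 1 - α from by ring])
  have hgr : gr u = (4 / (1 - α ^ 2)) * ((1 + u) / 2 - u ^ ((1 - α) / 2))
      - (4 / (1 - α ^ 2)) * ((1 + u) / 2 - u ^ ((1 + α) / 2)) := by
    show (4 / (1 - (-α) ^ 2)) * ((1 + u) / 2 - u ^ ((1 + -α) / 2)) - _ = _
    norm_num [show (1:ℝ) + -α = 1 - α from by ring]
    rfl
  have hgbar : gbar u = (4 / (1 - α ^ 2)) * ((1 + u) / 2 - u ^ ((1 + α) / 2))
      + (4 / (1 - α ^ 2)) * ((1 + u) / 2 - u ^ ((1 - α) / 2)) := by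
    show _ + (4 / (1 - (-α) ^ 2)) * ((1 + u) / 2 - u ^ ((1 + -α) / 2)) = _
    norm_num [show (1:ℝ) + -α = 1 - α from by ring]
    rfl
  rw [hgbar, hderiv, hgr, ha,
    Real.rpow_sub_one hu.ne' ((1 - α) / 2), Real.rpow_sub_one hu.ne' ((1 + α) / 2)]
  field_simp
  ring
end

section
/- The unique twice-differentiable solution g : (0,∞) → ℝ of the ODE -g(u) + g'(u)(u-1) - 2g''(u)·u·(1+u) + 4 = 0 with initial conditions g(1) = 0 and g'(1) = 0 is g(u) = 2(1-√u)². -/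
/-- A function with zero derivative on `(0,∞)` is constant there. -/
lemma const_on_Ioi_aux {F : ℝ → ℝ} (hF : ∀ x ∈ Set.Ioi (0 : ℝ), HasDerivAt F 0 x) :
    ∀ u ∈ Set.Ioi (0 : ℝ), F u = F 1 := by
  intro u hu
  have hconv : Convex ℝ (Set.Ioi (0 : ℝ)) := convex_Ioi 0
  have hdiff : DifferentiableOn ℝ F (Set.Ioi (0 : ℝ)) :=
    fun x hx => ((hF x hx).differentiableAt).differentiableWithinAt
  refine hconv.is_const_of_fderivWithin_eq_zero hdiff (fun x hx => ?_) hu (by norm_num)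
  rw [fderivWithin_of_isOpen isOpen_Ioi hx, (hF x hx).hasFDerivAt.fderiv]
  ext
  simp

/-- The unique twice-differentiable solution of
-g(u) + g'(u)(u-1) - 2g''(u)u(1+u) + 4 = 0 on (0,∞) with g(1) = 0, g'(1) = 0
is g(u) = 2(1-√u)². -/
theorem stmt15 (g : ℝ → ℝ)
    (hg : ∀ x ∈ Set.Ioi (0 : ℝ), DifferentiableAt ℝ g x)
    (hg' : ∀ x ∈ Set.Ioi (0 : ℝ), DifferentiableAt ℝ (deriv g) x)
    (hode : ∀ u : ℝ, 0 < u →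
      -g u + deriv g u * (u - 1) - 2 * deriv (deriv g) u * u * (1 + u) + 4 = 0)
    (h0 : g 1 = 0) (h0' : deriv g 1 = 0) :
    ∀ u : ℝ, 0 < u → g u = 2 * (1 - Real.sqrt u) ^ 2 := by
  -- Step 1: F u = (u * g' u - g u / 2 - u + 1)/(1+u) has zero derivative, is 0 at 1.
  set F : ℝ → ℝ := fun u => (u * deriv g u - g u / 2 - u + 1) / (1 + u) with hFdef
  have hFderiv : ∀ x ∈ Set.Ioi (0 : ℝ), HasDerivAt F 0 x := by
    intro x hx
    have hx0 : (0:ℝ) < x := hx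
    have h1x : (1 : ℝ) + x ≠ 0 := by linarith
    have hgx : HasDerivAt g (deriv g x) x := (hg x hx).hasDerivAt
    have hg'x : HasDerivAt (deriv g) (deriv (deriv g) x) x := (hg' x hx).hasDerivAt
    have hN : HasDerivAt (fun u => u * deriv g u - g u / 2 - u + 1)
        (1 * deriv g x + x * deriv (deriv g) x - deriv g x / 2 - 1) x := by
      exact ((((hasDerivAt_id x).mul hg'x).sub (hgx.div_const 2)).sub
        (hasDerivAt_id x)).add_const 1
    have hD : HasDerivAt (fun u => (1:ℝ) + u) 1 x := by
      simpa using (hasDerivAt_id x).const_add (1:ℝ)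
    have := hN.div hD h1x
    refine this.congr_deriv (Eq.symm ?_)
    have hodex := hode x hx0
    field_simp
    nlinarith [hodex, sq_nonneg x]
  have hF1 : F 1 = 0 := by simp [hFdef, h0, h0']
  have hFzero : ∀ u ∈ Set.Ioi (0:ℝ), F u = 0 := by
    intro u hu
    rw [const_on_Ioi_aux hFderiv u hu, hF1]
  -- hence the first-order relation
  have hrel : ∀ u : ℝ, 0 < u → u * deriv g u - g u / 2 - u + 1 = 0 := by
    intro u hu
    have h1u : (1:ℝ) + u ≠ 0 := by linarith
    have := hFzero u hu
    rw [hFdef] at this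
    field_simp at this
    linarith
  -- Step 2: G u = g u / √u - 2/√u + 4 - 2√u has zero derivative.
  set G : ℝ → ℝ := fun u => g u / Real.sqrt u - 2 / Real.sqrt u + 4 - 2 * Real.sqrt u
    with hGdef
  have hGderiv : ∀ x ∈ Set.Ioi (0 : ℝ), HasDerivAt G 0 x := by
    intro x hx
    have hx0 : (0:ℝ) < x := hx
    have hs : Real.sqrt x ≠ 0 := by positivity
    have hsq : Real.sqrt x * Real.sqrt x = x := Real.mul_self_sqrt hx0.le
    have hgx : HasDerivAt g (deriv g x) x := (hg x hx).hasDerivAt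
    have hsqrt : HasDerivAt Real.sqrt (1 / (2 * Real.sqrt x)) x :=
      Real.hasDerivAt_sqrt hx0.ne'
    have hG : HasDerivAt G
        ((deriv g x * Real.sqrt x - g x * (1 / (2 * Real.sqrt x))) / (Real.sqrt x)^2
          - (0 * Real.sqrt x - 2 * (1 / (2 * Real.sqrt x))) / (Real.sqrt x)^2
          - 2 * (1 / (2 * Real.sqrt x))) x := by
      exact (((hgx.div hsqrt hs).sub ((hasDerivAt_const x (2:ℝ)).div hsqrt hs)).add_const
        4).sub (hsqrt.const_mul 2)
    convert hG using 1
    have hr := hrel x hx0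
    have hdg : deriv g x = g x / (2 * x) + 1 - 1 / x := by
      field_simp
      linear_combination 2 * hr
    have h2 : Real.sqrt x ^ 2 = x := Real.sq_sqrt hx0.le
    rw [hdg]
    field_simp
    linear_combination (2 - g x) * h2
  have hG1 : G 1 = 0 := by norm_num [hGdef, h0]
  intro u hu
  have hGz : G u = 0 := by
    rw [const_on_Ioi_aux hGderiv u (Set.mem_Ioi.mpr hu), hG1]
  have hs : Real.sqrt u ≠ 0 := by positivity
  have hsq : Real.sqrt u * Real.sqrt u = u := Real.mul_self_sqrt hu.le
  rw [hGdef] at hGz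
  simp only at hGz
  have : g u / Real.sqrt u - 2 / Real.sqrt u + 4 - 2 * Real.sqrt u = 0 := hGz
  field_simp at this
  nlinarith [this, hsq]
end

section
/- For α ∈ (-1,1)∪(1,3]∪[-3,-1) and a ∈ ℝ, the function g_r(u) = (4/(1-α²))(u^((1+α)/2) - u^((1-α)/2)) - (4α/(1-α²) + 2a)(u-1) satisfies the third-order linear ODE (α²-1)g_r(u) - (α²-1)(1+u)g_r'(u) + 4u(u+2)g_r''(u) + 4u²(u+1)g_r'''(u) - 4a(α²-1) + 8α = 0 on (0,∞), with g_r(1) = 0, g_r'(1) = -2a, g_r''(1) = 0. -/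
/-- For α ∈ [-3,3], α ≠ ±1, and a ∈ ℝ, the function
g_r(u) = (4/(1-α²))(u^((1+α)/2) - u^((1-α)/2)) - (4α/(1-α²) + 2a)(u-1)
satisfies the third-order ODE
(α²-1)g_r - (α²-1)(1+u)g_r' + 4u(u+2)g_r'' + 4u²(u+1)g_r''' - 4a(α²-1) + 8α = 0
on (0,∞), with g_r(1) = 0, g_r'(1) = -2a, g_r''(1) = 0. -/

theorem stmt17 (α a : ℝ) (hα : α ∈ Set.Icc (-3 : ℝ) 3) (h1 : α ≠ 1) (h2 : α ≠ -1) :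
    let gr : ℝ → ℝ := fun u =>
      (4 / (1 - α ^ 2)) * (u ^ ((1 + α) / 2) - u ^ ((1 - α) / 2)) -
        (4 * α / (1 - α ^ 2) + 2 * a) * (u - 1)
    (∀ u : ℝ, 0 < u →
      (α ^ 2 - 1) * gr u - (α ^ 2 - 1) * (1 + u) * deriv gr u +
        4 * u * (u + 2) * deriv (deriv gr) u +
        4 * u ^ 2 * (u + 1) * deriv (deriv (deriv gr)) u -
        4 * a * (α ^ 2 - 1) + 8 * α = 0) ∧
    gr 1 = 0 ∧ deriv gr 1 = -2 * a ∧ deriv (deriv gr) 1 = 0 := by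
  intro gr
  have hα2 : 1 - α ^ 2 ≠ 0 := by
    intro h
    have h' : (α - 1) * (α + 1) = 0 := by ring_nf; nlinarith
    rcases mul_eq_zero.1 h' with h'' | h''
    · exact h1 (by linarith)
    · exact h2 (by linarith)
  set p : ℝ := (1 + α) / 2 with hp
  set q : ℝ := (1 - α) / 2 with hq
  set c : ℝ := 4 / (1 - α ^ 2) with hc
  set d : ℝ := 4 * α / (1 - α ^ 2) + 2 * a with hd
  set D1 : ℝ → ℝ := fun u => c * (p * u ^ (p - 1) - q * u ^ (q - 1)) - d with hD1
  set D2 : ℝ → ℝ := fun u =>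
    c * (p * ((p - 1) * u ^ (p - 1 - 1)) - q * ((q - 1) * u ^ (q - 1 - 1))) with hD2
  set D3 : ℝ → ℝ := fun u =>
    c * (p * ((p - 1) * ((p - 1 - 1) * u ^ (p - 1 - 1 - 1))) -
      q * ((q - 1) * ((q - 1 - 1) * u ^ (q - 1 - 1 - 1)))) with hD3
  have key : ∀ (r u : ℝ), 0 < u → HasDerivAt (fun x : ℝ => x ^ r) (r * u ^ (r - 1)) u :=
    fun r u hu => Real.hasDerivAt_rpow_const (Or.inl hu.ne')
  have hgr : gr = fun u => c * (u ^ p - u ^ q) - d * (u - 1) := rfl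
  have hd1 : ∀ u : ℝ, 0 < u → HasDerivAt gr (D1 u) u := by
    intro u hu
    have h := (((key p u hu).sub (key q u hu)).const_mul c).sub
      (((hasDerivAt_id u).sub_const 1).const_mul d)
    rw [hgr]
    exact h.congr_deriv (by simp [D1])
  have hd2 : ∀ u : ℝ, 0 < u → HasDerivAt D1 (D2 u) u := by
    intro u hu
    have h := ((((key (p - 1) u hu).const_mul p).sub
      ((key (q - 1) u hu).const_mul q)).const_mul c).sub_const d
    simpa [D1, D2] using h
  have hd3 : ∀ u : ℝ, 0 < u → HasDerivAt D2 (D3 u) u := by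
    intro u hu
    have h := ((((key (p - 1 - 1) u hu).const_mul (p - 1)).const_mul p).sub
      (((key (q - 1 - 1) u hu).const_mul (q - 1)).const_mul q)).const_mul c
    simpa [D2, D3, mul_assoc] using h
  have e1 : ∀ u : ℝ, 0 < u → deriv gr u = D1 u := fun u hu => (hd1 u hu).deriv
  have e2 : ∀ u : ℝ, 0 < u → deriv (deriv gr) u = D2 u := by
    intro u hu
    have hev : deriv gr =ᶠ[nhds u] D1 := by
      filter_upwards [isOpen_Ioi.mem_nhds (show u ∈ Set.Ioi (0:ℝ) from hu)] with x hx
      exact e1 x hx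
    rw [hev.deriv_eq, (hd2 u hu).deriv]
  have e3 : ∀ u : ℝ, 0 < u → deriv (deriv (deriv gr)) u = D3 u := by
    intro u hu
    have hev : deriv (deriv gr) =ᶠ[nhds u] D2 := by
      filter_upwards [isOpen_Ioi.mem_nhds (show u ∈ Set.Ioi (0:ℝ) from hu)] with x hx
      exact e2 x hx
    rw [hev.deriv_eq, (hd3 u hu).deriv]
  refine ⟨?_, ?_, ?_, ?_⟩
  · intro u hu
    rw [e1 u hu, e2 u hu, e3 u hu]
    have hsub : ∀ r : ℝ, u ^ (r - 1) = u ^ r / u := by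
      intro r; rw [Real.rpow_sub hu, Real.rpow_one]
    have hdid : d * (1 - α ^ 2) = 4 * α + 2 * a * (1 - α ^ 2) := by
      rw [hd]; field_simp
    have hgr' : gr u = c * (u ^ p - u ^ q) - d * (u - 1) := by rw [hgr]
    rw [hgr']
    simp only [D1, D2, D3, hsub, hp, hq]
    field_simp [hu.ne']
    have hinv : (1 - α ^ 2)⁻¹ * (1 - α ^ 2) = 1 := inv_mul_cancel₀ hα2
    linear_combination (-2 * u ^ 3) * hdid + (8 * α * u ^ 3 - 64 * α * u) * hinv
  · simp [gr, Real.one_rpow]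
  · rw [e1 1 one_pos]
    simp only [D1, Real.one_rpow, mul_one]
    rw [hc, hd, hp, hq]; ring
  · rw [e2 1 one_pos]
    simp only [D2, Real.one_rpow, mul_one]
    field_simp [hp, hq, hc]
    ring
end
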